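/- arXiv:2507.10408 — 6 statements merged into one kernel-verified Lean document; each statement's English description precedes it below -/
import Mathlib

section
/- For t ∈ [0,1], the map a_t(x,y) = ((1-t)²x, (1-t)y + t) on ℝ² satisfies: if (x,y) satisfies x < 1, y < 1, 4x > 3(1-y)², 4y > 3(1-x)², and (x ≤ (1-y)² or y ≤ (1-x)²), and t < 1, then a_t(x,y) satisfies the same system of inequalities. -/
noncomputable def aMap (t : ℝ) (p : ℝ × ℝ) : ℝ × ℝ := ((1 - t)^2 * p.1, (1 - t) * p.2 + t)

noncomputable def bMap (t : ℝ) (p : ℝ × ℝ) : ℝ × ℝ := ((1 - t) * p.1 + t, (1 - t)^2 * p.2)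

def inRegion (p : ℝ × ℝ) : Prop :=
  p.1 < 1 ∧ p.2 < 1 ∧ 4 * p.1 > 3 * (1 - p.2)^2 ∧ 4 * p.2 > 3 * (1 - p.1)^2 ∧
    (p.1 ≤ (1 - p.2)^2 ∨ p.2 ≤ (1 - p.1)^2)

theorem region_invariant_aMap (t : ℝ) (ht0 : 0 ≤ t) (ht1 : t ≤ 1) (ht : t < 1)
    (p : ℝ × ℝ) (hp : inRegion p) : inRegion (aMap t p) := by
  obtain ⟨h1, h2, h3, h4, h5⟩ := hp
  set x := p.1 with hx
  set y := p.2 with hy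
  have hs : (0:ℝ) < 1 - t := by linarith
  have hxpos : 0 < x := by nlinarith [sq_nonneg (1 - y)]
  have hypos : 0 < y := by nlinarith [sq_nonneg (1 - x)]
  refine ⟨?_, ?_, ?_, ?_, ?_⟩
  · show (1 - t)^2 * x < 1
    nlinarith [sq_nonneg t, mul_pos hs hxpos]
  · show (1 - t) * y + t < 1
    nlinarith [mul_pos hs (by linarith : (0:ℝ) < 1 - y)]
  · show 4 * ((1 - t)^2 * x) > 3 * (1 - ((1 - t) * y + t))^2
    have key : 1 - ((1 - t) * y + t) = (1 - t) * (1 - y) := by ring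
    rw [key]
    nlinarith [mul_lt_mul_of_pos_left h3 (mul_pos hs hs)]
  · show 4 * ((1 - t) * y + t) > 3 * (1 - (1 - t)^2 * x)^2
    have key : 4 * ((1 - t) * y + t) - 3 * (1 - (1 - t)^2 * x)^2 =
        (1 - t) * (4 * y - 3 * (1 - x)^2) +
        t * ((1 - 3 * (1 - t) * x)^2 + 3 * (1 - t) * x^2 * t^2) := by ring
    nlinarith [key, mul_lt_mul_of_pos_left h4 hs,
      mul_nonneg ht0 (sq_nonneg (1 - 3 * (1 - t) * x)),
      mul_nonneg ht0 (mul_nonneg (mul_nonneg (le_of_lt hs) (sq_nonneg x))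
        (mul_nonneg ht0 ht0))]
  · rcases le_or_gt x ((1 - y)^2) with hc | hc
    · left
      show (1 - t)^2 * x ≤ (1 - ((1 - t) * y + t))^2
      have key : 1 - ((1 - t) * y + t) = (1 - t) * (1 - y) := by ring
      rw [key]
      calc (1 - t)^2 * x ≤ (1 - t)^2 * (1 - y)^2 :=
            mul_le_mul_of_nonneg_left hc (sq_nonneg _)
        _ = ((1 - t) * (1 - y))^2 := by ring
    · right
      have h5' : y ≤ (1 - x)^2 := by
        rcases h5 with h | h
        · linarith
        · exact h
      -- From x > (1-y)^2 and y ≤ (1-x)^2 deduce x ≤ 2/3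
      have hv : (0:ℝ) ≤ 1 - (1 - x)^2 := by nlinarith
      have h6 : (1 - (1 - x)^2)^2 ≤ (1 - y)^2 := by
        apply pow_le_pow_left₀ hv
        · linarith
      have h7 : x ≤ 2/3 := by nlinarith [h6, hc, hxpos, h1, sq_nonneg (1 - x)]
      show (1 - t) * y + t ≤ (1 - (1 - t)^2 * x)^2
      have key : (1 - (1 - t)^2 * x)^2 - ((1 - t) * y + t) =
          (1 - t) * ((1 - x)^2 - y) +
          (1 - t) * x * t * (2 - x * (1 + (1 - t) + (1 - t)^2)) := by ring
      have term1 : 0 ≤ (1 - t) * ((1 - x)^2 - y) :=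
        mul_nonneg (le_of_lt hs) (by linarith)
      have hb : x * (1 + (1 - t) + (1 - t)^2) ≤ 2 := by
        nlinarith [mul_nonneg (le_of_lt hxpos) (mul_nonneg ht0 ht0),
          mul_nonneg (le_of_lt hxpos) ht0]
      have term2 : 0 ≤ (1 - t) * x * t * (2 - x * (1 + (1 - t) + (1 - t)^2)) :=
        mul_nonneg (mul_nonneg (mul_nonneg (le_of_lt hs) (le_of_lt hxpos)) ht0)
          (by linarith)
      linarith [key, term1, term2]
end

section
/- For t ∈ [0,1), the map b_t(x,y) = ((1-t)x + t, (1-t)²y) on ℝ² preserves the region defined by x < 1, y < 1, 4x > 3(1-y)², 4y > 3(1-x)², and (x ≤ (1-y)² or y ≤ (1-x)²). -/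
theorem region_invariant_bMap (t : ℝ) (ht0 : 0 ≤ t) (ht : t < 1)
    (p : ℝ × ℝ) (hp : inRegion p) : inRegion (bMap t p) := by
  obtain ⟨x, y⟩ := p
  obtain ⟨hx1, hy1, h3, h4, hdisj⟩ := hp
  simp only [inRegion, bMap] at *
  have hs0 : 0 < 1 - t := by linarith
  have hy0 : 0 < y := by nlinarith [sq_nonneg (1 - x)]
  have hx0 : 0 < x := by nlinarith [sq_nonneg (1 - y)]
  refine ⟨?_, ?_, ?_, ?_, ?_⟩
  · nlinarith [mul_pos hs0 (show (0:ℝ) < 1 - x by linarith)]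
  · nlinarith [mul_nonneg (mul_nonneg hs0.le hs0.le) hy0.le,
      mul_nonneg hs0.le hy0.le, mul_pos hs0 hy0]
  · -- 4 ((1-t) x + t) > 3 (1 - (1-t)² y)²
    nlinarith [mul_pos hs0 (show (0:ℝ) < 4*x - 3*(1-y)^2 by linarith),
      mul_nonneg ht0 (sq_nonneg (1 - 3*(1-t)*y)),
      mul_nonneg (mul_nonneg (mul_nonneg hs0.le (sq_nonneg y)) ht0) (sq_nonneg t)]
  · nlinarith [mul_pos (mul_pos hs0 hs0) (show (0:ℝ) < 4*y - 3*(1-x)^2 by linarith)]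
  · by_cases hyx : y ≤ (1 - x)^2
    · right
      nlinarith [mul_nonneg (mul_nonneg hs0.le hs0.le)
        (show (0:ℝ) ≤ (1-x)^2 - y by linarith)]
    · push_neg at hyx
      have hxle : x ≤ (1 - y)^2 := by
        rcases hdisj with h | h
        · exact h
        · linarith
      have hy23 : 3 * y < 2 := by
        nlinarith [mul_pos hy0 (sub_pos.2 hyx), sq_nonneg (y*(2-y) - 1),
          mul_nonneg (mul_nonneg hy0.le hy0.le) (sq_nonneg (2 - y))]
      have hkey : (0:ℝ) ≤ 2 - y*(1 + (1-t) + (1-t)^2) := by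
        nlinarith [mul_nonneg hy0.le (mul_nonneg ht0 (show (0:ℝ) ≤ 2 - t by linarith))]
      left
      nlinarith [mul_nonneg hs0.le (show (0:ℝ) ≤ (1-y)^2 - x by linarith),
        mul_nonneg (mul_nonneg (mul_nonneg hs0.le hy0.le) ht0) hkey]
end

section
/- Let M' be the smallest subset of ℝ² containing (1,0) and (0,1) that is invariant under all maps a_t(x,y) = ((1-t)²x, (1-t)y+t) and b_t(x,y) = ((1-t)x+t, (1-t)²y) for 0 ≤ t ≤ 1. Then (1/3, 1/3) ∉ M'. -/
noncomputable def Mprime : Set (ℝ × ℝ) :=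
  ⋂₀ {S : Set (ℝ × ℝ) | ((1 : ℝ), (0 : ℝ)) ∈ S ∧ ((0 : ℝ), (1 : ℝ)) ∈ S ∧
    ∀ t : ℝ, 0 ≤ t → t ≤ 1 → ∀ p ∈ S, aMap t p ∈ S ∧ bMap t p ∈ S}

def P (x y : ℝ) : Prop :=
  (1-y)^2 ≤ x ∨ (1-x)^2 ≤ y ∨
    (x < 1 ∧ y < 1 ∧ 3*(1-y)^2 < 4*x ∧ 3*(1-x)^2 < 4*y ∧ (x ≤ (1-y)^2 ∨ y ≤ (1-x)^2))

lemma P_symm {x y : ℝ} (h : P x y) : P y x := by unfold P at *; tauto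

set_option maxHeartbeats 1000000 in
lemma hE_pos (s x : ℝ) (hs0' : 0 < s) (hs1' : s < 1) :
    0 < 1 - 6*s*x + 3*s*x^2*(1+s+s^2) := by
  have ha : (0:ℝ) < 3*s*(1+s+s^2) := by nlinarith
  have h3s : (0:ℝ) < 3*s*(1-s)^2 := mul_pos (by linarith) (pow_pos (by linarith) 2)
  nlinarith [sq_nonneg (3*s*(1+s+s^2)*x - 3*s), ha, h3s]

set_option maxHeartbeats 1000000 in
lemma caseB (s x y : ℝ) (hs0' : 0 < s) (hs1' : s < 1)
    (hx : x < (1-y)^2) (hv : s*y+1-s < (1-s^2*x)^2) (hB : (1-x)^2 ≤ y) :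
    P (s^2*x) (s*y+1-s) := by
  have hE := hE_pos s x hs0' hs1'
  have F5 : s^2*x ≤ (1-(s*y+1-s))^2 := by
    linarith [mul_nonneg (sq_nonneg s) (show (0:ℝ) ≤ (1-y)^2 - x by linarith)]
  have hsy : s*(1-x)^2 ≤ s*y := mul_le_mul_of_nonneg_left hB hs0'.le
  have h1 : 0 < s*((1-s)*(2*x - x^2*(1+s+s^2))) := by linarith [hv, hsy]
  have h2 : 0 < 2*x - x^2*(1+s+s^2) := by
    nlinarith [h1, mul_pos hs0' (show (0:ℝ) < 1-s by linarith)]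
  have hx0 : 0 < x := by
    linarith [h2, mul_nonneg (sq_nonneg x) (show (0:ℝ) ≤ 1+s+s^2 by nlinarith)]
  have hx2 : x < 2 := by
    nlinarith [h2, hx0, mul_nonneg (mul_nonneg hx0.le hx0.le) hs0'.le,
      mul_nonneg (mul_nonneg hx0.le hx0.le) (mul_nonneg hs0'.le hs0'.le)]
  have ha1 : s^2*x ≤ x := by
    linarith [mul_nonneg hx0.le (show (0:ℝ) ≤ 1 - s^2 by nlinarith)]
  have ha0 : 0 < s^2*x := by positivity
  have hy1 : y < 1 := by
    have hsy1 : s*y < s*1 := by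
      linarith [hv, mul_nonneg ha0.le (show (0:ℝ) ≤ 2 - s^2*x by linarith)]
    exact lt_of_mul_lt_mul_left hsy1 hs0'.le
  have hy0 : 0 ≤ y := le_trans (sq_nonneg (1-x)) hB
  have hw : 1 - y ≤ 2*x - x^2 := by linarith [hB, sq_nonneg (1-x)]
  have hw0 : 0 < 1 - y := by linarith
  have hsq : (1-y)*(1-y) ≤ (2*x-x^2)*(2*x-x^2) :=
    mul_le_mul hw hw hw0.le (by linarith)
  have hprod : 0 ≤ x*((x-2/3)^2*(8/3-x)) :=
    mul_nonneg hx0.le (mul_nonneg (sq_nonneg _) (by linarith))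
  have h13 : 3*(1-y)^2 < 4*x := by linarith [hsq, hprod, hx0]
  have F3 : 3*(1-(s*y+1-s))^2 < 4*(s^2*x) := by
    linarith [mul_pos (mul_pos hs0' hs0') (show (0:ℝ) < 4*x - 3*(1-y)^2 by linarith)]
  have F4 : 3*(1-s^2*x)^2 < 4*(s*y+1-s) := by
    linarith [mul_pos (show (0:ℝ) < 1-s by linarith) hE,
      mul_nonneg hs0'.le (show (0:ℝ) ≤ y-(1-x)^2 by linarith),
      mul_nonneg hs0'.le (sq_nonneg (1-x))]
  have F2 : s*y+1-s < 1 := by linarith [mul_pos hs0' hw0]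
  have F1 : s^2*x < 1 := by
    linarith [mul_pos (mul_pos hs0' hs0') (show (0:ℝ) < (1-y)^2 - x by linarith),
      mul_nonneg (show (0:ℝ) ≤ 1 - s^2 by nlinarith) (sq_nonneg (1-y)),
      mul_nonneg hw0.le hy0, hy0]
  exact Or.inr (Or.inr ⟨F1, F2, F3, F4, Or.inl F5⟩)

set_option maxHeartbeats 1000000 in
lemma caseC (s x y : ℝ) (hs0' : 0 < s) (hs1' : s < 1)
    (hx : x < (1-y)^2) (hv : s*y+1-s < (1-s^2*x)^2)
    (hx1 : x < 1) (hy1 : y < 1) (h3 : 3*(1-y)^2 < 4*x) (h4 : 3*(1-x)^2 < 4*y) :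
    P (s^2*x) (s*y+1-s) := by
  have hE := hE_pos s x hs0' hs1'
  have F5 : s^2*x ≤ (1-(s*y+1-s))^2 := by
    linarith [mul_nonneg (sq_nonneg s) (show (0:ℝ) ≤ (1-y)^2 - x by linarith)]
  have hy0 : 0 < y := by
    linarith [h4, mul_pos (show (0:ℝ) < 1-x by linarith) (show (0:ℝ) < 1-x by linarith)]
  have F2 : s*y+1-s < 1 := by
    linarith [mul_pos hs0' (show (0:ℝ) < 1-y by linarith)]
  have F3 : 3*(1-(s*y+1-s))^2 < 4*(s^2*x) := by
    linarith [mul_pos (mul_pos hs0' hs0') (show (0:ℝ) < 4*x - 3*(1-y)^2 by linarith)]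
  have F4 : 3*(1-s^2*x)^2 < 4*(s*y+1-s) := by
    linarith [mul_pos (show (0:ℝ) < 1-s by linarith) hE,
      mul_pos hs0' (show (0:ℝ) < 4*y - 3*(1-x)^2 by linarith)]
  have hv0 : 0 < s*y+1-s := by linarith [mul_pos hs0' hy0]
  have F1 : s^2*x < 1 := by
    linarith [mul_pos (mul_pos hs0' hs0') (show (0:ℝ) < (1-y)^2 - x by linarith),
      mul_pos hv0 (show (0:ℝ) < 2 - (s*y+1-s) by linarith)]
  exact Or.inr (Or.inr ⟨F1, F2, F3, F4, Or.inl F5⟩)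

set_option maxHeartbeats 1000000 in
lemma keyP (s x y : ℝ) (hs0 : 0 ≤ s) (hs1 : s ≤ 1) (h : P x y) :
    P (s^2*x) (s*y+1-s) := by
  rcases eq_or_lt_of_le hs0 with h0 | hs0'
  · rw [← h0]; unfold P; norm_num
  rcases eq_or_lt_of_le hs1 with h1 | hs1'
  · rw [h1]; simpa using h
  by_cases hx : (1-y)^2 ≤ x
  · left; nlinarith [mul_nonneg (sq_nonneg s) (sub_nonneg.2 hx)]
  push_neg at hx
  by_cases hv : (1-s^2*x)^2 ≤ s*y+1-s
  · right; left; linarith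
  push_neg at hv
  rcases h with h | hB | hC
  · linarith
  · exact caseB s x y hs0' hs1' hx hv hB
  · exact caseC s x y hs0' hs1' hx hv hC.1 hC.2.1 hC.2.2.1 hC.2.2.2.1

theorem third_third_not_mem_Mprime : ((1/3 : ℝ), (1/3 : ℝ)) ∉ Mprime := by
  intro hmem
  have hS : P (1/3 : ℝ) (1/3 : ℝ) := by
    refine hmem {p | P p.1 p.2} ⟨?_, ?_, ?_⟩
    · show P 1 0; left; norm_num
    · show P 0 1; right; left; norm_num
    · intro t ht0 ht1 p hp
      have hs0 : (0:ℝ) ≤ 1 - t := by linarith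
      have hs1 : (1:ℝ) - t ≤ 1 := by linarith
      constructor
      · have h := keyP (1-t) p.1 p.2 hs0 hs1 hp
        have e : (1-t)*p.2 + 1 - (1-t) = (1-t)*p.2 + t := by ring
        show P ((1-t)^2*p.1) ((1-t)*p.2+t)
        rw [← e]; exact h
      · have h := P_symm (keyP (1-t) p.2 p.1 hs0 hs1 (P_symm hp))
        have e : (1-t)*p.1 + 1 - (1-t) = (1-t)*p.1 + t := by ring
        show P ((1-t)*p.1+t) ((1-t)^2*p.2)
        rw [← e]; exact h
  unfold P at hS
  norm_num at hS
end

section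
/- Every element of M' ∖ {(1,0),(0,1)} satisfies x < 1, y < 1, 4x > 3(1-y)², 4y > 3(1-x)², and (x ≤ (1-y)² or y ≤ (1-x)²). -/
lemma inRegion_swap {x y : ℝ} (h : inRegion (x, y)) : inRegion (y, x) := by
  obtain ⟨a, b, c, d, e⟩ := h
  exact ⟨b, a, d, c, e.symm⟩

lemma regionA {x y : ℝ} (t : ℝ) (h : inRegion (x, y)) (ht0 : 0 ≤ t) (ht1 : t < 1) :
    inRegion (aMap t (x, y)) := by
  obtain ⟨hx1, hy1, h3, h4, h5⟩ := h
  simp only at hx1 hy1 h3 h4 h5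
  have hs0 : (0:ℝ) < 1 - t := by linarith
  have hx0 : 0 < x := by nlinarith [sq_nonneg (1 - y)]
  have hy0 : 0 < y := by nlinarith [sq_nonneg (1 - x)]
  refine ⟨?_, ?_, ?_, ?_, ?_⟩ <;> simp only [aMap]
  · nlinarith [sq_nonneg t, mul_pos hx0 (mul_pos hs0 hs0)]
  · nlinarith
  · nlinarith [mul_pos (mul_pos hs0 hs0) (show (0:ℝ) < 4*x - 3*(1-y)^2 by linarith)]
  · nlinarith [mul_pos hs0 (show (0:ℝ) < 4*y - 3*(1-x)^2 by linarith),
      mul_nonneg ht0 (add_nonneg (sq_nonneg (3*x*(1-t)-1))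
        (mul_nonneg (mul_nonneg (by linarith : (0:ℝ) ≤ 3*(1-t)) (sq_nonneg x)) (sq_nonneg t)))]
  · rcases le_or_gt x ((1-y)^2) with hle | hgt
    · left
      nlinarith [mul_nonneg (mul_nonneg hs0.le hs0.le) (sub_nonneg.2 hle)]
    · have hyx : y ≤ (1-x)^2 := by
        rcases h5 with h5 | h5
        · linarith
        · exact h5
      rcases le_or_gt (x * (1 + (1-t) + (1-t)^2)) 2 with hc | hc
      · right
        nlinarith [mul_nonneg hs0.le (show (0:ℝ) ≤ (1-y) - x*(2-x) by nlinarith),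
          mul_nonneg (mul_nonneg (mul_nonneg hs0.le hx0.le) ht0) (by linarith : (0:ℝ) ≤ 2 - x*(1+(1-t)+(1-t)^2))]
      · exfalso
        have hx23 : (2:ℝ)/3 < x := by nlinarith [sq_nonneg (1-t)]
        have hu : x*(2-x) ≤ 1 - y := by nlinarith
        nlinarith [sq_nonneg (x*(2-x)), mul_pos hx0 hx0, sq_nonneg (1-x),
          mul_pos (show (0:ℝ) < 1 - x by linarith) (show (0:ℝ) < x - 2/3 by linarith),
          mul_nonneg (mul_nonneg hx0.le hx0.le) (sq_nonneg (2-x))]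

lemma bMap_swap (t : ℝ) (x y : ℝ) : bMap t (x, y) = ((aMap t (y, x)).2, (aMap t (y, x)).1) := by
  simp [aMap, bMap]

lemma regionB {x y : ℝ} (t : ℝ) (h : inRegion (x, y)) (ht0 : 0 ≤ t) (ht1 : t < 1) :
    inRegion (bMap t (x, y)) := by
  rw [bMap_swap]
  have := regionA t (inRegion_swap h) ht0 ht1
  obtain ⟨a, b, c, d, e⟩ := this
  exact ⟨b, a, d, c, e.symm⟩

lemma regionA_gen1 (t : ℝ) (ht0 : 0 < t) (ht1 : t < 1) :
    inRegion (aMap t ((1:ℝ), (0:ℝ))) := by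
  refine ⟨?_, ?_, ?_, ?_, ?_⟩ <;> simp only [aMap]
  · nlinarith
  · nlinarith
  · nlinarith
  · -- 4t > 3(1-(1-t)^2)^2 : identity 4t-3t^2(2-t)^2 = t((3t-2)^2+3t^2(1-t))
    nlinarith [mul_pos ht0 (show (0:ℝ) < (3*t-2)^2 + 3*t^2*(1-t) by nlinarith [sq_nonneg (3*t-2), mul_pos (mul_pos ht0 ht0) (show (0:ℝ) < 1 - t by linarith)])]
  · left; nlinarith

lemma aMap_gen2 (t : ℝ) : aMap t ((0:ℝ), (1:ℝ)) = ((0:ℝ), (1:ℝ)) := by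
  simp [aMap]

lemma bMap_gen1 (t : ℝ) : bMap t ((1:ℝ), (0:ℝ)) = ((1:ℝ), (0:ℝ)) := by
  simp [bMap]

theorem Mprime_subset_region (p : ℝ × ℝ) (hp : p ∈ Mprime)
    (h1 : p ≠ ((1 : ℝ), (0 : ℝ))) (h2 : p ≠ ((0 : ℝ), (1 : ℝ))) : inRegion p := by
  set S : Set (ℝ × ℝ) := {q | q = ((1:ℝ), (0:ℝ)) ∨ q = ((0:ℝ), (1:ℝ)) ∨ inRegion q} with hS
  have hmem : p ∈ S := by
    apply hp
    refine ⟨Or.inl rfl, Or.inr (Or.inl rfl), ?_⟩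
    intro t ht0 ht1 q hq
    rcases hq with rfl | rfl | hq
    · constructor
      · rcases eq_or_lt_of_le ht1 with rfl | ht1'
        · right; left
          simp [aMap]
        · rcases eq_or_lt_of_le ht0 with rfl | ht0'
          · left; simp [aMap]
          · right; right; exact regionA_gen1 t ht0' ht1'
      · left; exact bMap_gen1 t
    · constructor
      · right; left; exact aMap_gen2 t
      · rcases eq_or_lt_of_le ht1 with rfl | ht1'
        · left
          simp [bMap]
        · rcases eq_or_lt_of_le ht0 with rfl | ht0'
          · right; left; simp [bMap]
          · right; right
            rw [bMap_swap]
            have := regionA_gen1 t ht0' ht1'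
            obtain ⟨a, b, c, d, e⟩ := this
            exact ⟨b, a, d, c, e.symm⟩
    · obtain ⟨x, y⟩ := q
      rcases eq_or_lt_of_le ht1 with rfl | ht1'
      · constructor
        · right; left; simp [aMap]
        · left; simp [bMap]
      · exact ⟨Or.inr (Or.inr (regionA t hq ht0 ht1')),
          Or.inr (Or.inr (regionB t hq ht0 ht1'))⟩
  rcases hmem with h | h | h
  · exact absurd h h1
  · exact absurd h h2
  · exact h
end

section
/- Every point on the diagonal {(x,x) : 0 < x < 1} satisfying 4x > 3(1-x)² and x ≤ (1-x)² lies in M'. -/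
set_option maxHeartbeats 1000000

/-- The key algebraic step: composing the b- and a-maps with specific rational
parameters advances the auxiliary sequence of points. -/
lemma step_eq (M : ℝ) (hM : 0 ≤ M) :
    aMap (2/(2*M+5)) (bMap (2/(2*M+4)) ((2*M+1)/(6*M+9), (M+2)/(3*M+3)))
      = ((2*(M+1)+1)/(6*(M+1)+9), ((M+1)+2)/(3*(M+1)+3)) := by
  have d1 : (2*M+4) ≠ 0 := by positivity
  have d2 : (2*M+5) ≠ 0 := by positivity
  have d3 : (6*M+9) ≠ 0 := by positivity
  have d4 : (3*M+3) ≠ 0 := by positivity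
  have d5 : (6*(M+1)+9) ≠ 0 := by positivity
  have d6 : (3*(M+1)+3) ≠ 0 := by positivity
  simp only [aMap, bMap, Prod.mk.injEq]
  constructor <;> field_simp <;> ring

/-- The auxiliary points ((2m+1)/(6m+9), (m+2)/(3m+3)) all lie in every admissible set. -/
lemma q_mem (S : Set (ℝ × ℝ)) (h10 : ((1:ℝ), (0:ℝ)) ∈ S)
    (hcl : ∀ t : ℝ, 0 ≤ t → t ≤ 1 → ∀ p ∈ S, aMap t p ∈ S ∧ bMap t p ∈ S) :
    ∀ m : ℕ, (((2*m+1)/(6*m+9) : ℝ), ((m+2)/(3*m+3) : ℝ)) ∈ S := by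
  intro m
  induction m with
  | zero =>
    have h := (hcl (2/3) (by norm_num) (by norm_num) _ h10).1
    have e : aMap (2/3) ((1:ℝ), (0:ℝ))
        = (((2*(0:ℕ)+1)/(6*(0:ℕ)+9) : ℝ), (((0:ℕ)+2)/(3*(0:ℕ)+3) : ℝ)) := by
      simp only [aMap, Prod.mk.injEq]
      norm_num
    rwa [e] at h
  | succ n ih =>
    have hM0 : (0:ℝ) ≤ (n:ℝ) := Nat.cast_nonneg n
    have h1 := (hcl (2/(2*(n:ℝ)+4)) (by positivity)
      (by rw [div_le_one (by positivity)]; linarith) _ ih).2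
    have h2 := (hcl (2/(2*(n:ℝ)+5)) (by positivity)
      (by rw [div_le_one (by positivity)]; linarith) _ h1).1
    push_cast
    rw [← step_eq (n:ℝ) hM0]
    exact h2

theorem diagonal_in_Mprime (x : ℝ) (h0 : 0 < x) (h1 : x < 1)
    (h2 : 4 * x > 3 * (1 - x)^2) (h3 : x ≤ (1 - x)^2) : (x, x) ∈ Mprime := by
  intro S hS
  obtain ⟨h10, h01, hcl⟩ := hS
  have hx3 : 1 < 3 * x := by nlinarith [sq_nonneg (1 - x)]
  set ε : ℝ := 4*x - 3*(1-x)^2 with hε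
  have hεpos : 0 < ε := by simp only [hε]; linarith
  obtain ⟨m, hm⟩ := exists_nat_gt (max (x/ε) ((2-3*x)/(3*x-1)))
  set M : ℝ := (m : ℝ) with hMdef
  have hM0 : (0:ℝ) ≤ M := Nat.cast_nonneg m
  have hm1 : x/ε < M := lt_of_le_of_lt (le_max_left _ _) hm
  have hm2 : (2-3*x)/(3*x-1) < M := lt_of_le_of_lt (le_max_right _ _) hm
  have hMε : x < M * ε := by rw [div_lt_iff₀ hεpos] at hm1; linarith
  have hkey : x ≤ (M+1)^2 * ε := by
    have h' : 0 ≤ (M^2 + M + 1) * ε := mul_nonneg (by nlinarith) hεpos.le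
    nlinarith
  set P : ℝ := (2*M+1)/(6*M+9) with hP
  set Q : ℝ := (M+2)/(3*M+3) with hQ
  have hQx : Q ≤ x := by
    rw [div_lt_iff₀ (by linarith)] at hm2
    rw [hQ, div_le_iff₀ (by positivity)]
    nlinarith
  have hqm : (P, Q) ∈ S := q_mem S h10 hcl m
  set f : ℝ → ℝ := fun v => P*(v^2-x)^2 - (1-Q)^2 * v^3 * (v-(1-x)) with hf
  have hQ1 : 1 - Q = (2*M+1)/(3*M+3) := by rw [hQ]; field_simp; ring
  have hQlt1 : Q < 1 := by rw [hQ, div_lt_one (by positivity)]; linarith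
  have hQ0 : 0 ≤ Q := by rw [hQ]; positivity
  have hP0 : 0 ≤ P := by rw [hP]; positivity
  have hsx : Real.sqrt x ≤ 1 - x := by
    have := Real.sqrt_le_sqrt h3
    rwa [Real.sqrt_sq (by linarith)] at this
  have hsx0 : 0 < Real.sqrt x := Real.sqrt_pos.2 h0
  have hsq : (Real.sqrt x)^2 = x := Real.sq_sqrt h0.le
  have hfa : 0 ≤ f (Real.sqrt x) := by
    simp only [hf, hsq]
    have hn : 0 ≤ (1-Q)^2 * (Real.sqrt x)^3 * ((1-x) - Real.sqrt x) :=
      mul_nonneg (mul_nonneg (sq_nonneg _) (pow_pos hsx0 3).le) (by linarith)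
    nlinarith [hn]
  have hfb : f 1 ≤ 0 := by
    have e1 : f 1 = 3*(2*M+1)*(x - (M+1)^2*ε) / ((6*M+9)*(3*M+3)^2) := by
      simp only [hf, hε]
      rw [hP, hQ1]
      have d3 : (6*M+9) ≠ 0 := by positivity
      have d4 : (3*M+3) ≠ 0 := by positivity
      field_simp
      ring
    rw [e1]
    apply div_nonpos_of_nonpos_of_nonneg
    · nlinarith
    · positivity
  have hab : Real.sqrt x ≤ 1 := by linarith
  have hcont : ContinuousOn f (Set.Icc (Real.sqrt x) 1) := by
    apply Continuous.continuousOn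
    rw [hf]; fun_prop
  obtain ⟨v, hv, hfv⟩ := intermediate_value_Icc' hab hcont ⟨hfb, hfa⟩
  obtain ⟨hva, hvb⟩ := hv
  have hv0 : 0 < v := lt_of_lt_of_le hsx0 hva
  have hvx : x ≤ v^2 := by nlinarith
  set t : ℝ := 1 - (v^2 - x)/(v^2*(1-Q)) with ht
  set s : ℝ := 1 - v with hs
  have hden : 0 < v^2*(1-Q) := mul_pos (by positivity) (by linarith)
  have ht0 : 0 ≤ t := by
    rw [ht, sub_nonneg, div_le_one hden]
    have hv2 : v^2 ≤ 1 := by nlinarith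
    nlinarith [mul_le_mul_of_nonneg_right hv2 hQ0]
  have ht1 : t ≤ 1 := by
    have : 0 ≤ (v^2 - x)/(v^2*(1-Q)) := div_nonneg (by linarith) hden.le
    rw [ht]; linarith
  have hs0 : 0 ≤ s := by rw [hs]; linarith
  have hs1 : s ≤ 1 := by rw [hs]; linarith
  have mem1 := (hcl t ht0 ht1 _ hqm).1
  have mem2 := (hcl s hs0 hs1 _ mem1).2
  have hfv' : P*(v^2-x)^2 - (1-Q)^2 * v^3 * (v-(1-x)) = 0 := hfv
  have hvne : v ≠ 0 := hv0.ne'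
  have hQne : 1 - Q ≠ 0 := by linarith
  have keyeq : bMap s (aMap t (P, Q)) = (x, x) := by
    simp only [aMap, bMap, ht, hs, Prod.mk.injEq]
    constructor
    · show (1 - (1-v)) * ((1 - (1 - (v^2 - x)/(v^2*(1-Q))))^2 * P) + (1-v) = x
      field_simp
      linear_combination v * hfv'
    · show (1 - (1-v))^2 * ((1 - (1 - (v^2 - x)/(v^2*(1-Q)))) * Q
          + (1 - (v^2 - x)/(v^2*(1-Q)))) = x
      field_simp
      ring
  rwa [keyeq] at mem2
end

section
/- On a 3-step nilpotent Lie algebra 𝔤 over ℝ, the operation a · b = a + b + (1/2)[a,b] + (1/12)[a,[a,b]] + (1/12)[b,[b,a]] defines a group structure on the underlying set of 𝔤, with identity 0 and inverse −a. -/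
/-- Truncated Baker–Campbell–Hausdorff product on a 3-step nilpotent Lie algebra. -/
noncomputable def bchMul {L : Type*} [LieRing L] [LieAlgebra ℝ L] (a b : L) : L :=
  a + b + (1/2 : ℝ) • ⁅a, b⁆ + (1/12 : ℝ) • ⁅a, ⁅a, b⁆⁆ + (1/12 : ℝ) • ⁅b, ⁅b, a⁆⁆

theorem bch_group_structure (L : Type*) [LieRing L] [LieAlgebra ℝ L]
    (hnil : ∀ a b c d : L, ⁅a, ⁅b, ⁅c, d⁆⁆⁆ = 0) :
    (∀ a b c : L, bchMul (bchMul a b) c = bchMul a (bchMul b c)) ∧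
      (∀ a : L, bchMul 0 a = a) ∧ (∀ a : L, bchMul a 0 = a) ∧
      (∀ a : L, bchMul a (-a) = 0) ∧ (∀ a : L, bchMul (-a) a = 0) := by
  refine ⟨?_, ?_, ?_, ?_, ?_⟩
  · intro a b c
    have h2 : ∀ x y z w : L, ⁅⁅x,y⁆,⁅z,w⁆⁆ = 0 := by
      intro x y z w; rw [lie_lie, hnil, hnil, sub_zero]
    have hba : ⁅b,a⁆ = -⁅a,b⁆ := by rw [← lie_skew]
    have hca : ⁅c,a⁆ = -⁅a,c⁆ := by rw [← lie_skew]
    have hcb : ⁅c,b⁆ = -⁅b,c⁆ := by rw [← lie_skew]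
    have hcab : ⁅c,⁅a,b⁆⁆ = ⁅b,⁅a,c⁆⁆ - ⁅a,⁅b,c⁆⁆ := by
      have hl := lie_lie a b c
      have h := lie_skew ⁅a,b⁆ c
      rw [hl] at h; rw [neg_eq_iff_eq_neg] at h; rw [h]; abel
    simp only [bchMul, add_lie, lie_add, smul_lie, lie_smul, lie_lie, hnil, lie_zero, zero_lie,
      smul_zero, add_zero, zero_add, sub_zero, h2, smul_neg, neg_neg, smul_smul,
      hba, hca, hcb, hcab, lie_neg, neg_lie, lie_sub, sub_lie]
    module
  · intro a; simp [bchMul]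
  · intro a; simp [bchMul]
  · intro a; simp [bchMul]
  · intro a; simp [bchMul]
end
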